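/- Let n ≥ 3 and let (c i, r i), i ∈ Fin n, be pairwise distinct circles (r i > 0) forming a nondegenerate family: there is no point p and no three distinct indices i, j, k such that p lies on the circles i, j, k and these three circles are pairwise tangent. Let s : Fin n → ℝ with s i = 1 or s i = −1 for each i (a combination of signs). Define S ⊆ ℝ² × ℝ as the set of pairs (x, ρ) with ρ ≥ 0 such that either for every i, dist x (c i) = |ρ + s i * r i|, or for every i, dist x (c i) = |ρ − s i * r i|. Then S has at most 2 elements. -/

import Mathlib

noncomputable section

/-- The Euclidean plane. -/
abbrev Plane := EuclideanSpace ℝ (Fin 2)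

/-- Two circles (center, radius) are tangent: they are distinct and the distance between
centers equals the sum (external) or the absolute difference (internal) of the radii. -/
def Tangent (A B : Plane × ℝ) : Prop :=
  A ≠ B ∧ (dist A.1 B.1 = A.2 + B.2 ∨ dist A.1 B.1 = |A.2 - B.2|)


/-- If the cross product of `u` and `x` vanishes and `u ≠ 0`, then `x` is a multiple of `u`. -/
lemma cross_zero (u1 u2 u3 x1 x2 x3 : ℝ)
    (h1 : u2*x3 - u3*x2 = 0) (h2 : u3*x1 - u1*x3 = 0) (h3 : u1*x2 - u2*x1 = 0)
    (hu : ¬(u1 = 0 ∧ u2 = 0 ∧ u3 = 0)) :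
    ∃ t, x1 = t*u1 ∧ x2 = t*u2 ∧ x3 = t*u3 := by
  by_cases hu1 : u1 = 0
  · by_cases hu2 : u2 = 0
    · have hu3 : u3 ≠ 0 := fun h => hu ⟨hu1, hu2, h⟩
      refine ⟨x3/u3, ?_, ?_, (div_mul_cancel₀ x3 hu3).symm⟩
      · rw [div_mul_eq_mul_div, eq_div_iff hu3]; linear_combination h2
      · rw [div_mul_eq_mul_div, eq_div_iff hu3]; linear_combination -h1
    · refine ⟨x2/u2, ?_, (div_mul_cancel₀ x2 hu2).symm, ?_⟩
      · rw [div_mul_eq_mul_div, eq_div_iff hu2]; linear_combination -h3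
      · rw [div_mul_eq_mul_div, eq_div_iff hu2]; linear_combination h1
  · refine ⟨x1/u1, (div_mul_cancel₀ x1 hu1).symm, ?_, ?_⟩
    · rw [div_mul_eq_mul_div, eq_div_iff hu1]; linear_combination h3
    · rw [div_mul_eq_mul_div, eq_div_iff hu1]; linear_combination -h2

/-- A null vector orthogonal (Minkowski) to a nonzero null vector is a multiple of it. -/
lemma null_perp (x y z a b d : ℝ) (hu : x^2+y^2 = z^2) (hv : a^2+b^2 = d^2)
    (hB : x*a + y*b = z*d) (hvne : ¬(a=0 ∧ b=0 ∧ d=0)) :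
    ∃ μ, x = μ*a ∧ y = μ*b ∧ z = μ*d := by
  have hab : 0 < a^2 + b^2 := by
    rcases lt_or_eq_of_le (by positivity : (0:ℝ) ≤ a^2+b^2) with h | h
    · exact h
    · exfalso
      have ha : a = 0 := by
        have : a^2 = 0 := by linarith [sq_nonneg a, sq_nonneg b]
        exact pow_eq_zero_iff (n := 2) (by norm_num) |>.mp this
      have hb : b = 0 := by
        have : b^2 = 0 := by linarith [sq_nonneg a, sq_nonneg b]
        exact pow_eq_zero_iff (n := 2) (by norm_num) |>.mp this
      have hd : d = 0 := by
        have : d^2 = 0 := by linarith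
        exact pow_eq_zero_iff (n := 2) (by norm_num) |>.mp this
      exact hvne ⟨ha, hb, hd⟩
  have habne : a^2 + b^2 ≠ 0 := ne_of_gt hab
  have key : (x*b - y*a)^2 = 0 := by
    linear_combination (a^2+b^2)*hu + z^2*hv - (x*a+y*b+z*d)*hB
  have hxb : x*b = y*a := by
    have := pow_eq_zero_iff (n := 2) (by norm_num) |>.mp key
    linarith
  refine ⟨(x*a + y*b)/(a^2+b^2), ?_, ?_, ?_⟩
  · rw [div_mul_eq_mul_div, eq_div_iff habne]; linear_combination b*hxb
  · rw [div_mul_eq_mul_div, eq_div_iff habne]; linear_combination (-a)*hxb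
  · rw [div_mul_eq_mul_div, eq_div_iff habne]; linear_combination z*hv - d*hB

/-- Two vectors Minkowski-orthogonal to two independent vectors are parallel. -/
lemma ortho3 (d1x d1y d1z d2x d2y d2z vx vy vz wx wy wz : ℝ)
    (hd1 : ¬(d1x = 0 ∧ d1y = 0 ∧ d1z = 0))
    (hind : ¬ ∃ t, d2x = t*d1x ∧ d2y = t*d1y ∧ d2z = t*d1z)
    (hv : ¬(vx = 0 ∧ vy = 0 ∧ vz = 0))
    (h1v : d1x*vx + d1y*vy - d1z*vz = 0)
    (h1w : d1x*wx + d1y*wy - d1z*wz = 0)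
    (h2v : d2x*vx + d2y*vy - d2z*vz = 0)
    (h2w : d2x*wx + d2y*wy - d2z*wz = 0) :
    ∃ t, wx = t*vx ∧ wy = t*vy ∧ wz = t*vz := by
  have hm : ¬((d1z*d2y - d1y*d2z) = 0 ∧ (d1x*d2z - d1z*d2x) = 0 ∧ (d1x*d2y - d1y*d2x) = 0) := by
    rintro ⟨e1, e2, e3⟩
    obtain ⟨t, ht1, ht2, ht3⟩ := cross_zero d1x d1y (-d1z) d2x d2y (-d2z)
      (by linarith) (by linarith) (by linarith)
      (by rintro ⟨a, b, cc⟩; exact hd1 ⟨a, b, by linarith⟩)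
    exact hind ⟨t, ht1, ht2, by linarith⟩
  obtain ⟨α, hva, hvb, hvc⟩ := cross_zero (d1z*d2y - d1y*d2z) (d1x*d2z - d1z*d2x)
    (d1x*d2y - d1y*d2x) vx vy vz
    (by linear_combination d2x*h1v - d1x*h2v)
    (by linear_combination d2y*h1v - d1y*h2v)
    (by linear_combination -d2z*h1v + d1z*h2v) hm
  obtain ⟨β, hwa, hwb, hwc⟩ := cross_zero (d1z*d2y - d1y*d2z) (d1x*d2z - d1z*d2x)
    (d1x*d2y - d1y*d2x) wx wy wz
    (by linear_combination d2x*h1w - d1x*h2w)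
    (by linear_combination d2y*h1w - d1y*h2w)
    (by linear_combination -d2z*h1w + d1z*h2w) hm
  have hα : α ≠ 0 := by
    rintro rfl
    exact hv ⟨by simpa using hva, by simpa using hvb, by simpa using hvc⟩
  refine ⟨β/α, ?_, ?_, ?_⟩
  · rw [hva, hwa]; field_simp
  · rw [hvb, hwb]; field_simp
  · rw [hvc, hwc]; field_simp

set_option maxHeartbeats 1000000 in
/-- Core Minkowski lemma: three distinct points on the light cones of three apexes force
the apexes to be mutually null-separated and on a common null line hitting height 0. -/
lemma core (a0 b0 e0 a1 b1 e1 a2 b2 e2 x1 y1 z1 x2 y2 z2 x3 y3 z3 : ℝ)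
    (hA01 : ¬(a0 = a1 ∧ b0 = b1 ∧ e0 = e1))
    (hA02 : ¬(a0 = a2 ∧ b0 = b2 ∧ e0 = e2))
    (hA12 : ¬(a1 = a2 ∧ b1 = b2 ∧ e1 = e2))
    (hP12 : ¬(x1 = x2 ∧ y1 = y2 ∧ z1 = z2))
    (hP13 : ¬(x1 = x3 ∧ y1 = y3 ∧ z1 = z3))
    (hP23 : ¬(x2 = x3 ∧ y2 = y3 ∧ z2 = z3))
    (E10 : (x1-a0)^2+(y1-b0)^2 = (z1+e0)^2)
    (E11 : (x1-a1)^2+(y1-b1)^2 = (z1+e1)^2)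
    (E12 : (x1-a2)^2+(y1-b2)^2 = (z1+e2)^2)
    (E20 : (x2-a0)^2+(y2-b0)^2 = (z2+e0)^2)
    (E21 : (x2-a1)^2+(y2-b1)^2 = (z2+e1)^2)
    (E22 : (x2-a2)^2+(y2-b2)^2 = (z2+e2)^2)
    (E30 : (x3-a0)^2+(y3-b0)^2 = (z3+e0)^2)
    (E31 : (x3-a1)^2+(y3-b1)^2 = (z3+e1)^2)
    (E32 : (x3-a2)^2+(y3-b2)^2 = (z3+e2)^2) :
    ((a0-a1)^2+(b0-b1)^2 = (e0-e1)^2) ∧ ((a0-a2)^2+(b0-b2)^2 = (e0-e2)^2) ∧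
    ((a1-a2)^2+(b1-b2)^2 = (e1-e2)^2) ∧
    ∃ px py : ℝ, ((px-a0)^2+(py-b0)^2 = e0^2) ∧ ((px-a1)^2+(py-b1)^2 = e1^2) ∧
      ((px-a2)^2+(py-b2)^2 = e2^2) := by
  -- P1 P2 distinct as vectors
  -- Step 1: the three points are collinear.
  have hcol : ∃ t, x3 = x1 + t*(x2-x1) ∧ y3 = y1 + t*(y2-y1) ∧ z3 = z1 + t*(z2-z1) := by
    by_contra hncol
    -- B(P2-P1, A1-A0) = 0 etc.
    have B1v : (x2-x1)*(a1-a0) + (y2-y1)*(b1-b0) - (z2-z1)*(e0-e1) = 0 := by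
      linear_combination (E20 - E21 - E10 + E11)/2
    have B1w : (x2-x1)*(a2-a0) + (y2-y1)*(b2-b0) - (z2-z1)*(e0-e2) = 0 := by
      linear_combination (E20 - E22 - E10 + E12)/2
    have B2v : (x3-x1)*(a1-a0) + (y3-y1)*(b1-b0) - (z3-z1)*(e0-e1) = 0 := by
      linear_combination (E30 - E31 - E10 + E11)/2
    have B2w : (x3-x1)*(a2-a0) + (y3-y1)*(b2-b0) - (z3-z1)*(e0-e2) = 0 := by
      linear_combination (E30 - E32 - E10 + E12)/2
    have hd1 : ¬(x2-x1 = 0 ∧ y2-y1 = 0 ∧ z2-z1 = 0) := by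
      rintro ⟨h1, h2, h3⟩; exact hP12 ⟨by linarith, by linarith, by linarith⟩
    have hind : ¬ ∃ t, x3-x1 = t*(x2-x1) ∧ y3-y1 = t*(y2-y1) ∧ z3-z1 = t*(z2-z1) := by
      rintro ⟨t, h1, h2, h3⟩; exact hncol ⟨t, by linarith, by linarith, by linarith⟩
    have hvne : ¬(a1-a0 = 0 ∧ b1-b0 = 0 ∧ e0-e1 = 0) := by
      rintro ⟨h1, h2, h3⟩; exact hA01 ⟨by linarith, by linarith, by linarith⟩
    obtain ⟨t, htx, hty, htz⟩ := ortho3 (x2-x1) (y2-y1) (z2-z1) (x3-x1) (y3-y1) (z3-z1)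
      (a1-a0) (b1-b0) (e0-e1) (a2-a0) (b2-b0) (e0-e2) hd1 hind hvne B1v B1w B2v B2w
    have ht0 : t ≠ 0 := by
      rintro rfl
      exact hA02 ⟨by linarith [htx], by linarith [hty], by linarith [htz]⟩
    have ht1 : t ≠ 1 := by
      rintro rfl
      exact hA12 ⟨by linarith [htx], by linarith [hty], by linarith [htz]⟩
    -- 2*B(Pk - A0, v) = q(v)
    have hB1 : 2*((x1-a0)*(a1-a0) + (y1-b0)*(b1-b0) - (z1+e0)*(e0-e1))
        = (a1-a0)^2 + (b1-b0)^2 - (e0-e1)^2 := by linear_combination E10 - E11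
    have hB2 : 2*((x2-a0)*(a1-a0) + (y2-b0)*(b1-b0) - (z2+e0)*(e0-e1))
        = (a1-a0)^2 + (b1-b0)^2 - (e0-e1)^2 := by linear_combination E20 - E21
    have hB3 : 2*((x3-a0)*(a1-a0) + (y3-b0)*(b1-b0) - (z3+e0)*(e0-e1))
        = (a1-a0)^2 + (b1-b0)^2 - (e0-e1)^2 := by linear_combination E30 - E31
    have step : -2*((x1-a0)*(a2-a0) + (y1-b0)*(b2-b0) - (z1+e0)*(e0-e2))
        + ((a2-a0)^2+(b2-b0)^2-(e0-e2)^2) = 0 := by linear_combination E12 - E10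
    rw [htx, hty, htz] at step
    have hB1' : 2*t*((x1-a0)*(a1-a0) + (y1-b0)*(b1-b0) - (z1+e0)*(e0-e1))
        = t^2*((a1-a0)^2 + (b1-b0)^2 - (e0-e1)^2) := by
      linear_combination -step
    have hqv : (a1-a0)^2 + (b1-b0)^2 - (e0-e1)^2 = 0 := by
      have h5 : t*(t-1)*((a1-a0)^2 + (b1-b0)^2 - (e0-e1)^2) = 0 := by
        linear_combination t*hB1 - hB1'
      rcases mul_eq_zero.mp h5 with h | h
      · rcases mul_eq_zero.mp h with h | h
        · exact absurd h ht0
        · exact absurd (by linarith : t = 1) ht1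
      · exact h
    have hqv' : (a1-a0)^2 + (b1-b0)^2 = (e0-e1)^2 := by linarith
    have hBk1 : (x1-a0)*(a1-a0) + (y1-b0)*(b1-b0) = (z1+e0)*(e0-e1) := by linarith
    have hBk2 : (x2-a0)*(a1-a0) + (y2-b0)*(b1-b0) = (z2+e0)*(e0-e1) := by linarith
    have hBk3 : (x3-a0)*(a1-a0) + (y3-b0)*(b1-b0) = (z3+e0)*(e0-e1) := by linarith
    obtain ⟨m1, hm1x, hm1y, hm1z⟩ := null_perp (x1-a0) (y1-b0) (z1+e0) (a1-a0) (b1-b0) (e0-e1) E10 hqv' hBk1 hvne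
    obtain ⟨m2, hm2x, hm2y, hm2z⟩ := null_perp (x2-a0) (y2-b0) (z2+e0) (a1-a0) (b1-b0) (e0-e1) E20 hqv' hBk2 hvne
    obtain ⟨m3, hm3x, hm3y, hm3z⟩ := null_perp (x3-a0) (y3-b0) (z3+e0) (a1-a0) (b1-b0) (e0-e1) E30 hqv' hBk3 hvne
    have hm12 : m1 ≠ m2 := by
      rintro rfl
      exact hP12 ⟨by linarith, by linarith, by linarith⟩
    apply hncol
    refine ⟨(m3-m1)/(m2-m1), ?_, ?_, ?_⟩
    · have h2 : x2 - x1 = (m2-m1)*(a1-a0) := by linear_combination hm2x - hm1x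
      have h3 : x3 - x1 = (m3-m1)*(a1-a0) := by linear_combination hm3x - hm1x
      have hne : m2 - m1 ≠ 0 := sub_ne_zero.mpr (Ne.symm hm12)
      rw [h2, show (m3-m1)/(m2-m1)*((m2-m1)*(a1 - a0)) = (m3-m1)*(a1 - a0) from by
        field_simp]
      linarith [h3]
    · have h2 : y2 - y1 = (m2-m1)*(b1-b0) := by linear_combination hm2y - hm1y
      have h3 : y3 - y1 = (m3-m1)*(b1-b0) := by linear_combination hm3y - hm1y
      have hne : m2 - m1 ≠ 0 := sub_ne_zero.mpr (Ne.symm hm12)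
      rw [h2, show (m3-m1)/(m2-m1)*((m2-m1)*(b1 - b0)) = (m3-m1)*(b1 - b0) from by
        field_simp]
      linarith [h3]
    · have h2 : z2 - z1 = (m2-m1)*(e0-e1) := by linear_combination hm2z - hm1z
      have h3 : z3 - z1 = (m3-m1)*(e0-e1) := by linear_combination hm3z - hm1z
      have hne : m2 - m1 ≠ 0 := sub_ne_zero.mpr (Ne.symm hm12)
      rw [h2, show (m3-m1)/(m2-m1)*((m2-m1)*(e0 - e1)) = (m3-m1)*(e0 - e1) from by
        field_simp]
      linarith [h3]
  -- Step 2: exploit collinearity.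
  obtain ⟨t, htx, hty, htz⟩ := hcol
  have hd0 : ¬(x2-x1 = 0 ∧ y2-y1 = 0 ∧ z2-z1 = 0) := by
    rintro ⟨h1, h2, h3⟩; exact hP12 ⟨by linarith, by linarith, by linarith⟩
  have ht0 : t ≠ 0 := by
    rintro rfl
    exact hP13 ⟨by linarith, by linarith, by linarith⟩
  have ht1 : t ≠ 1 := by
    rintro rfl
    exact hP23 ⟨by linarith, by linarith, by linarith⟩
  -- for each apex i: 2*B(P1-Ai, d) + q(d) = 0 and 2t*B + t^2 q(d) = 0
  have key : ∀ a b e : ℝ, ((x1-a)^2+(y1-b)^2 = (z1+e)^2) →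
      ((x2-a)^2+(y2-b)^2 = (z2+e)^2) → ((x3-a)^2+(y3-b)^2 = (z3+e)^2) →
      ((x1-a)*(x2-x1) + (y1-b)*(y2-y1) - (z1+e)*(z2-z1) = 0) ∧
      ((x2-x1)^2 + (y2-y1)^2 = (z2-z1)^2) := by
    intro a b e F1 F2 F3
    have h1 : 2*((x1-a)*(x2-x1) + (y1-b)*(y2-y1) - (z1+e)*(z2-z1))
        + ((x2-x1)^2 + (y2-y1)^2 - (z2-z1)^2) = 0 := by linear_combination F2 - F1
    rw [htx, hty, htz] at F3
    have h2 : 2*t*((x1-a)*(x2-x1) + (y1-b)*(y2-y1) - (z1+e)*(z2-z1))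
        + t^2*((x2-x1)^2 + (y2-y1)^2 - (z2-z1)^2) = 0 := by
      linear_combination F3 - F1
    have h5 : t*(t-1)*((x2-x1)^2 + (y2-y1)^2 - (z2-z1)^2) = 0 := by
      linear_combination h2 - t*h1
    have hq : (x2-x1)^2 + (y2-y1)^2 - (z2-z1)^2 = 0 := by
      rcases mul_eq_zero.mp h5 with h | h
      · rcases mul_eq_zero.mp h with h | h
        · exact absurd h ht0
        · exact absurd (by linarith : t = 1) ht1
      · exact h
    exact ⟨by linarith, by linarith⟩
  obtain ⟨hB0, hqd⟩ := key a0 b0 e0 E10 E20 E30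
  obtain ⟨hB1, -⟩ := key a1 b1 e1 E11 E21 E31
  obtain ⟨hB2, -⟩ := key a2 b2 e2 E12 E22 E32
  obtain ⟨m0, h0x, h0y, h0z⟩ := null_perp (x1-a0) (y1-b0) (z1+e0) (x2-x1) (y2-y1) (z2-z1) E10 hqd (by linarith) hd0
  obtain ⟨m1, h1x, h1y, h1z⟩ := null_perp (x1-a1) (y1-b1) (z1+e1) (x2-x1) (y2-y1) (z2-z1) E11 hqd (by linarith) hd0
  obtain ⟨m2, h2x, h2y, h2z⟩ := null_perp (x1-a2) (y1-b2) (z1+e2) (x2-x1) (y2-y1) (z2-z1) E12 hqd (by linarith) hd0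
  have hdz : (z2 - z1) ≠ 0 := by
    intro h
    rw [h] at hqd
    norm_num at hqd
    have hx0 : x2 - x1 = 0 := by
      have : (x2-x1)^2 = 0 := by linarith [sq_nonneg (x2-x1), sq_nonneg (y2-y1)]
      exact pow_eq_zero_iff (n := 2) (by norm_num) |>.mp this
    have hy0 : y2 - y1 = 0 := by
      have : (y2-y1)^2 = 0 := by linarith [sq_nonneg (x2-x1), sq_nonneg (y2-y1)]
      exact pow_eq_zero_iff (n := 2) (by norm_num) |>.mp this
    exact hd0 ⟨hx0, hy0, h⟩
  refine ⟨?_, ?_, ?_, x1 - (z1/(z2-z1))*(x2-x1), y1 - (z1/(z2-z1))*(y2-y1), ?_, ?_, ?_⟩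
  · -- a0 - a1 = (m1 - m0) dx etc; e0 - e1 = (m0 - m1) dz
    have c1 : a0 - a1 = (m1 - m0)*(x2-x1) := by linear_combination h1x - h0x
    have c2 : b0 - b1 = (m1 - m0)*(y2-y1) := by linear_combination h1y - h0y
    have c3 : e0 - e1 = (m0 - m1)*(z2-z1) := by linear_combination h0z - h1z
    rw [c1, c2, c3]; linear_combination (m1-m0)^2 * hqd
  · have c1 : a0 - a2 = (m2 - m0)*(x2-x1) := by linarith
    have c2 : b0 - b2 = (m2 - m0)*(y2-y1) := by linarith
    have c3 : e0 - e2 = (m0 - m2)*(z2-z1) := by linarith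
    rw [c1, c2, c3]; linear_combination (m2-m0)^2 * hqd
  · have c1 : a1 - a2 = (m2 - m1)*(x2-x1) := by linarith
    have c2 : b1 - b2 = (m2 - m1)*(y2-y1) := by linarith
    have c3 : e1 - e2 = (m1 - m2)*(z2-z1) := by linarith
    rw [c1, c2, c3]; linear_combination (m2-m1)^2 * hqd
  · have c1 : x1 - (z1/(z2-z1))*(x2-x1) - a0 = (m0 - z1/(z2-z1))*(x2-x1) := by
      linear_combination h0x
    have c2 : y1 - (z1/(z2-z1))*(y2-y1) - b0 = (m0 - z1/(z2-z1))*(y2-y1) := by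
      linear_combination h0y
    have c3 : e0 = (m0 - z1/(z2-z1))*(z2-z1) := by
      rw [sub_mul, div_mul_cancel₀ z1 hdz]
      linarith [h0z]
    rw [c1, c2, c3]; linear_combination (m0 - z1/(z2-z1))^2 * hqd
  · have c1 : x1 - (z1/(z2-z1))*(x2-x1) - a1 = (m1 - z1/(z2-z1))*(x2-x1) := by
      linear_combination h1x
    have c2 : y1 - (z1/(z2-z1))*(y2-y1) - b1 = (m1 - z1/(z2-z1))*(y2-y1) := by
      linear_combination h1y
    have c3 : e1 = (m1 - z1/(z2-z1))*(z2-z1) := by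
      rw [sub_mul, div_mul_cancel₀ z1 hdz]
      linarith [h1z]
    rw [c1, c2, c3]; linear_combination (m1 - z1/(z2-z1))^2 * hqd
  · have c1 : x1 - (z1/(z2-z1))*(x2-x1) - a2 = (m2 - z1/(z2-z1))*(x2-x1) := by
      linear_combination h2x
    have c2 : y1 - (z1/(z2-z1))*(y2-y1) - b2 = (m2 - z1/(z2-z1))*(y2-y1) := by
      linear_combination h2y
    have c3 : e2 = (m2 - z1/(z2-z1))*(z2-z1) := by
      rw [sub_mul, div_mul_cancel₀ z1 hdz]
      linarith [h2z]
    rw [c1, c2, c3]; linear_combination (m2 - z1/(z2-z1))^2 * hqd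


/-- Equality of points in the plane from coordinatewise equality. -/
lemma plane_ext (x y : Plane) (h0 : x 0 = y 0) (h1 : x 1 = y 1) : x = y := by
  ext i; fin_cases i <;> assumption

/-- The squared distance in coordinates. -/
lemma dist2 (x y : Plane) : dist x y ^ 2 = (x 0 - y 0)^2 + (x 1 - y 1)^2 := by
  rw [EuclideanSpace.dist_eq, Real.sq_sqrt (by positivity)]
  simp [Fin.sum_univ_two, Real.dist_eq, sq_abs]

/-- Lemma 4 (paired solutions): for a nondegenerate family of at least 3 pairwise
distinct circles and a combination of signs, the set of suitable circles-or-points has at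
most two elements. -/
theorem paired_solutions
    (n : ℕ) (hn : 3 ≤ n) (c : Fin n → Plane) (r : Fin n → ℝ)
    (hr : ∀ i, 0 < r i)
    (hdist : ∀ i j, i ≠ j → (c i, r i) ≠ (c j, r j))
    (hnondeg : ¬ ∃ (p : Plane) (i j k : Fin n), i ≠ j ∧ j ≠ k ∧ i ≠ k ∧
      dist p (c i) = r i ∧ dist p (c j) = r j ∧ dist p (c k) = r k ∧
      Tangent (c i, r i) (c j, r j) ∧ Tangent (c j, r j) (c k, r k) ∧
      Tangent (c i, r i) (c k, r k))
    (s : Fin n → ℝ) (hs : ∀ i, s i = 1 ∨ s i = -1) :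
    {d : Plane × ℝ | 0 ≤ d.2 ∧
      ((∀ i, dist d.1 (c i) = |d.2 + s i * r i|) ∨
        (∀ i, dist d.1 (c i) = |d.2 - s i * r i|))}.encard ≤ 2 := by
  set S := {d : Plane × ℝ | 0 ≤ d.2 ∧
      ((∀ i, dist d.1 (c i) = |d.2 + s i * r i|) ∨
        (∀ i, dist d.1 (c i) = |d.2 - s i * r i|))} with hSdef
  by_contra hcon
  push_neg at hcon
  have h3 : (3 : ℕ∞) ≤ S.encard := Order.add_one_le_of_lt hcon
  obtain ⟨T, hTsub, hTcard⟩ := Set.exists_subset_encard_eq h3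
  rw [Set.encard_eq_three] at hTcard
  obtain ⟨u, v, w, huv, huw, hvw, rfl⟩ := hTcard
  have hu : u ∈ S := hTsub (by simp)
  have hv : v ∈ S := hTsub (by simp)
  have hw : w ∈ S := hTsub (by simp)
  -- lift each element to the double cone (choosing the sign of the height)
  have extract : ∀ d ∈ S, ∃ z : ℝ, |z| = d.2 ∧
      ∀ i, (d.1 0 - c i 0)^2 + (d.1 1 - c i 1)^2 = (z + s i * r i)^2 := by
    rintro d ⟨hd2, hd | hd⟩
    · exact ⟨d.2, abs_of_nonneg hd2,
        fun i => by rw [← dist2 d.1 (c i), hd i, sq_abs]⟩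
    · refine ⟨-d.2, by rw [abs_neg, abs_of_nonneg hd2], fun i => ?_⟩
      rw [← dist2 d.1 (c i), hd i, sq_abs]; ring
  obtain ⟨zu, hzu, Hu⟩ := extract u hu
  obtain ⟨zv, hzv, Hv⟩ := extract v hv
  obtain ⟨zw, hzw, Hw⟩ := extract w hw
  -- lifted points are pairwise distinct
  have inj : ∀ (d d' : Plane × ℝ) (z z' : ℝ), |z| = d.2 → |z'| = d'.2 → d ≠ d' →
      ¬(d.1 0 = d'.1 0 ∧ d.1 1 = d'.1 1 ∧ z = z') := by
    rintro d d' z z' hz hz' hne ⟨h1, h2, h3⟩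
    apply hne
    have hfst : d.1 = d'.1 := plane_ext _ _ h1 h2
    have hsnd : d.2 = d'.2 := by rw [← hz, ← hz', h3]
    exact Prod.ext hfst hsnd
  -- the three chosen indices
  set i0 : Fin n := ⟨0, by omega⟩ with hi0
  set i1 : Fin n := ⟨1, by omega⟩ with hi1
  set i2 : Fin n := ⟨2, by omega⟩ with hi2
  have hne01 : i0 ≠ i1 := by simp [hi0, hi1, Fin.ext_iff]
  have hne02 : i0 ≠ i2 := by simp [hi0, hi2, Fin.ext_iff]
  have hne12 : i1 ≠ i2 := by simp [hi1, hi2, Fin.ext_iff]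
  -- distinctness of apexes
  have apexne : ∀ i j : Fin n, i ≠ j →
      ¬(c i 0 = c j 0 ∧ c i 1 = c j 1 ∧ s i * r i = s j * r j) := by
    rintro i j hij ⟨h1, h2, h3⟩
    apply hdist i j hij
    have hc : c i = c j := plane_ext _ _ h1 h2
    have hrr : r i = r j := by
      rcases hs i with h | h <;> rcases hs j with h' | h' <;> rw [h, h'] at h3 <;>
        linarith [hr i, hr j]
    rw [hc, hrr]
  obtain ⟨T01, T02, T12, px, py, hp0, hp1, hp2⟩ :=
    core (c i0 0) (c i0 1) (s i0 * r i0) (c i1 0) (c i1 1) (s i1 * r i1)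
      (c i2 0) (c i2 1) (s i2 * r i2)
      (u.1 0) (u.1 1) zu (v.1 0) (v.1 1) zv (w.1 0) (w.1 1) zw
      (apexne i0 i1 hne01) (apexne i0 i2 hne02) (apexne i1 i2 hne12)
      (inj u v zu zv hzu hzv huv) (inj u w zu zw hzu hzw huw)
      (inj v w zv zw hzv hzw hvw)
      (Hu i0) (Hu i1) (Hu i2) (Hv i0) (Hv i1) (Hv i2) (Hw i0) (Hw i1) (Hw i2)
  obtain ⟨p, hpx, hpy⟩ : ∃ p : Plane, p 0 = px ∧ p 1 = py :=
    ⟨(WithLp.equiv 2 (Fin 2 → ℝ)).symm ![px, py], rfl, rfl⟩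
  have hsq : ∀ i : Fin n, (s i * r i)^2 = r i ^ 2 := fun i => by
    rcases hs i with h | h <;> rw [h] <;> ring
  have hponc : ∀ i : Fin n, ((p 0 - c i 0)^2 + (p 1 - c i 1)^2 = (s i * r i)^2) →
      dist p (c i) = r i := by
    intro i h
    have h2 : dist p (c i) ^ 2 = r i ^ 2 := by rw [dist2, h, hsq]
    rw [← Real.sqrt_sq dist_nonneg, h2, Real.sqrt_sq (hr i).le]
  have tang : ∀ i j : Fin n, i ≠ j →
      ((c i 0 - c j 0)^2 + (c i 1 - c j 1)^2 = (s i * r i - s j * r j)^2) →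
      Tangent (c i, r i) (c j, r j) := by
    intro i j hij hsq'
    refine ⟨hdist i j hij, ?_⟩
    have hd : dist (c i) (c j) = |s i * r i - s j * r j| := by
      rw [← Real.sqrt_sq dist_nonneg, dist2, hsq', Real.sqrt_sq_eq_abs]
    show dist (c i) (c j) = r i + r j ∨ dist (c i) (c j) = |r i - r j|
    rcases hs i with h | h <;> rcases hs j with h' | h' <;> rw [h, h'] at hd
    · right; rw [hd]; congr 1; ring
    · left; rw [hd, show (1:ℝ) * r i - -1 * r j = r i + r j by ring,
        abs_of_pos (by linarith [hr i, hr j])]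
    · left; rw [hd, show (-1:ℝ) * r i - 1 * r j = -(r i + r j) by ring, abs_neg,
        abs_of_pos (by linarith [hr i, hr j])]
    · right; rw [hd, show (-1:ℝ) * r i - -1 * r j = -(r i - r j) by ring, abs_neg]
  exact hnondeg ⟨p, i0, i1, i2, hne01, hne12, hne02,
    hponc i0 (by rw [hpx, hpy]; exact hp0),
    hponc i1 (by rw [hpx, hpy]; exact hp1),
    hponc i2 (by rw [hpx, hpy]; exact hp2),
    tang i0 i1 hne01 T01, tang i1 i2 hne12 T12, tang i0 i2 hne02 T02⟩
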